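/- arXiv:1003.3514 — 2 statements merged into one kernel-verified Lean document; each statement's English description precedes it below -/
import Mathlib

section
/- For every integer L ≥ 2, the translation operator 𝒯 maps the physical subspace 𝒲 into itself: if w ∈ 𝒲 then 𝒯w ∈ 𝒲. -/
open Matrix
open scoped Kronecker

noncomputable section

/-- π(σ): 3×3 matrix with rows (0,1,0),(0,0,1),(1,0,0). -/
def Smat : Matrix (Fin 3) (Fin 3) ℂ := !![0,1,0; 0,0,1; 1,0,0]

/-- π(τ): 3×3 matrix with rows (1,0,0),(0,0,1),(0,1,0). -/
def Tmat : Matrix (Fin 3) (Fin 3) ℂ := !![1,0,0; 0,0,1; 0,1,0]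

/-- The representation π_{(3,+)} on group elements of D₃ = DihedralGroup 3,
extended multiplicatively from π(σ) = Smat, π(τ) = Tmat.
Here `DihedralGroup.r i` = σ^i and `DihedralGroup.sr i` = τσ^i. -/
def pig : DihedralGroup 3 → Matrix (Fin 3) (Fin 3) ℂ
  | DihedralGroup.r i => Smat ^ i.val
  | DihedralGroup.sr i => Tmat * Smat ^ i.val

/-- The representation π_{(3,+)} on dual elements: π((σ^i)*) = 0 and
π((σ^i τ)*) = E^{i+1}_{i+1}.  Since σ^i τ = `DihedralGroup.sr (-i)`, the dual
of `sr j` acts as the matrix unit at position (-j).val. -/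
def pidual : DihedralGroup 3 → Matrix (Fin 3) (Fin 3) ℂ
  | DihedralGroup.r _ => 0
  | DihedralGroup.sr j =>
      Matrix.single ⟨(-j).val, ZMod.val_lt _⟩ ⟨(-j).val, ZMod.val_lt _⟩ 1

/-- The coproduct action Δ(g h*) on ℂ³⊗ℂ³. -/
def copr (g h : DihedralGroup 3) : Matrix (Fin 3 × Fin 3) (Fin 3 × Fin 3) ℂ :=
  ∑ k : DihedralGroup 3, (pig g * pidual (k⁻¹ * h)) ⊗ₖ (pig g * pidual k)

/-- The local two-site Hamiltonian 𝔥 = Σ_γ i(E^{γ(1)}_{γ(2)} ⊗ E^{γ(2)}_{γ(3)}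
− E^{γ(2)}_{γ(3)} ⊗ E^{γ(1)}_{γ(2)}), summed over permutations γ of {1,2,3}. -/
def hloc : Matrix (Fin 3 × Fin 3) (Fin 3 × Fin 3) ℂ :=
  ∑ γ : Equiv.Perm (Fin 3),
    Complex.I •
      ((Matrix.single (γ 0) (γ 1) (1 : ℂ)) ⊗ₖ (Matrix.single (γ 1) (γ 2) (1 : ℂ))
        - (Matrix.single (γ 1) (γ 2) (1 : ℂ)) ⊗ₖ (Matrix.single (γ 0) (γ 1) (1 : ℂ)))

/-- The L-fold coproduct action A(g,h) = Σ_{h_L⋯h₁ = h} ⊗_m π(g)π(h_m*)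
on (ℂ³)^{⊗L}. -/
def Afold (L : ℕ) (g h : DihedralGroup 3) :
    Matrix (Fin L → Fin 3) (Fin L → Fin 3) ℂ :=
  ∑ f : Fin L → DihedralGroup 3,
    if ((List.finRange L).reverse.map f).prod = h then
      Matrix.of (fun α β => ∏ m, (pig g * pidual (f m)) (α m) (β m))
    else 0

/-- The physical subspace 𝒲 = {w : A(g,h) w = δ_{h,e} w for all g,h}. -/
def physSpace (L : ℕ) : Set ((Fin L → Fin 3) → ℂ) :=
  {w | ∀ g h : DihedralGroup 3,
    (Afold L g h).mulVec w = (if h = 1 then (1 : ℂ) else 0) • w}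

/-- Cyclic successor on Fin L. -/
def cyc {L : ℕ} (m : Fin L) : Fin L := ⟨(m.val + 1) % L, Nat.mod_lt _ m.pos⟩

/-- The translation operator 𝒯, determined by
𝒯(v₁⊗v₂⊗⋯⊗v_L) = v_L⊗v₁⊗⋯⊗v_{L−1}. -/
def transOp (L : ℕ) (w : (Fin L → Fin 3) → ℂ) : (Fin L → Fin 3) → ℂ :=
  fun α => w (fun m => α (cyc m))

/-! Write `A(g,h) = ∑ ⊗ₘ M(hₘ)` over the labellings with `h_L ⋯ h₁ = h`, where `M(u) = π(g)π(u*)`.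
Moving `𝒯` through `A(g,h)` relabels the sites cyclically, and the ordered product of the
relabelled labels is the old one conjugated by the label `k` of the last site: `A(g,h) 𝒯 = 𝒯 Ã(g,h)`,
where `Ã(g,h)` sums over the labellings with `h_L ⋯ h₁ = k h k⁻¹`. Since `P_k = π(g)π(k*)π(g)⁻¹`
satisfies `P_k M(u) = δ_{u,k} M(u)`, placing `P_k` on the last site selects the labellings with
last label `k`, so `Ã(g,h) = ∑_k P_k^{(L)} A(g, k h k⁻¹)`. For `h ≠ e` each `k h k⁻¹ ≠ e`, hence
`Ã(g,h)` annihilates `𝒲`; and `Ã(g,e) = A(g,e)`. -/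

section SiteTensor

variable {ι V R : Type*} [Fintype ι] [CommSemiring R]

def siteTensor (N : ι → Matrix V V R) : Matrix (ι → V) (ι → V) R :=
  Matrix.of fun α β => ∏ m, N m (α m) (β m)

theorem siteTensor_mul [DecidableEq ι] [Fintype V] (N N' : ι → Matrix V V R) :
    siteTensor N * siteTensor N' = siteTensor (N * N') := by
  ext α β
  simp only [siteTensor, mul_apply, of_apply, Pi.mul_apply, Fintype.prod_sum,
    Finset.prod_mul_distrib]

theorem siteTensor_eq_zero {N : ι → Matrix V V R} {r : ι} (h : N r = 0) :
    siteTensor N = 0 := by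
  ext α β
  exact Finset.prod_eq_zero (Finset.mem_univ r) (by simp [h])

theorem siteTensor_comp_apply (e : ι ≃ ι) (N : ι → Matrix V V R) (α β : ι → V) :
    siteTensor (N ∘ e) (α ∘ e) (β ∘ e) = siteTensor N α β :=
  e.prod_comp fun m => N m (α m) (β m)

theorem siteTensor_update_mul_of_orthogonal {G : Type*} [DecidableEq G] [DecidableEq ι]
    [Fintype V] [DecidableEq V] {M P : G → Matrix V V R}
    (hP : ∀ k u, P k * M u = if u = k then M u else 0) (f : ι → G) (r : ι) (k : G) :
    siteTensor (Function.update 1 r (P k)) * siteTensor (fun m => M (f m)) =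
      if f r = k then siteTensor fun m => M (f m) else 0 := by
  have hupdate : Function.update (1 : ι → Matrix V V R) r (P k) * (fun m => M (f m)) =
      Function.update (fun m => M (f m)) r (P k * M (f r)) := by
    rw [← Function.update_eq_self r fun m => M (f m), ← Function.update_mul, one_mul,
      Function.update_idem]
  rw [siteTensor_mul, hupdate, hP]
  split_ifs
  · rw [Function.update_eq_self]
  · exact siteTensor_eq_zero (Function.update_self _ _ _)

end SiteTensor

theorem List.prod_map_reverse_finRange_comp_finRotate {G : Type*} [Monoid G] (n : ℕ)
    (f : Fin (n + 1) → G) :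
    ((finRange (n + 1)).reverse.map (f ∘ finRotate (n + 1))).prod * f 0
      = f 0 * ((finRange (n + 1)).reverse.map f).prod := by
  simp only [map_reverse, ← ofFn_eq_map]
  rw [ofFn_succ' (f ∘ _), ofFn_succ (f := f)]
  simp [mul_assoc]

section Chain

variable {G V R : Type*} [Group G] [Fintype G] [DecidableEq G] [CommSemiring R] {L : ℕ}

def chainAction (L : ℕ) (M : G → Matrix V V R) (h : G) : Matrix (Fin L → V) (Fin L → V) R :=
  ∑ f : Fin L → G,
    if ((List.finRange L).reverse.map f).prod = h then siteTensor fun m => M (f m) else 0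

def twistedChainAction (M : G → Matrix V V R) (h : G) (r : Fin L) :
    Matrix (Fin L → V) (Fin L → V) R :=
  ∑ f : Fin L → G,
    if ((List.finRange L).reverse.map f).prod = f r * h * (f r)⁻¹ then
      siteTensor fun m => M (f m)
    else 0

theorem twistedChainAction_one (M : G → Matrix V V R) (r : Fin L) :
    twistedChainAction M 1 r = chainAction L M 1 := by
  simp [twistedChainAction, chainAction]

theorem chainAction_eq_submatrix_twistedChainAction (n : ℕ) (M : G → Matrix V V R) (h : G) :
    chainAction (n + 1) M h =
      (twistedChainAction M h (Fin.last n)).submatrix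
        ((finRotate (n + 1)).symm.arrowCongr (Equiv.refl V))
        ((finRotate (n + 1)).symm.arrowCongr (Equiv.refl V)) := by
  have he : (finRotate (n + 1)).symm 0 = Fin.last n :=
    (Equiv.symm_apply_eq _).mpr finRotate_last.symm
  ext α β
  simp only [chainAction, twistedChainAction, submatrix_apply, Matrix.sum_apply]
  refine (Fintype.sum_bijective (fun f => f ∘ (finRotate (n + 1)).symm)
    ((finRotate (n + 1)).arrowCongr (Equiv.refl G)).bijective _ _ fun f => ?_).symm
  have hcond : ((List.finRange (n + 1)).reverse.map (f ∘ (finRotate (n + 1)).symm)).prod = h ↔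
      ((List.finRange (n + 1)).reverse.map f).prod = f (Fin.last n) * h * (f (Fin.last n))⁻¹ := by
    have hrot := List.prod_map_reverse_finRange_comp_finRotate n (f ∘ (finRotate (n + 1)).symm)
    simp only [Function.comp_assoc, Equiv.symm_comp_self, Function.comp_id, Function.comp_apply,
      he] at hrot
    rw [eq_mul_inv_iff_mul_eq, hrot, mul_right_inj]
  have htensor := siteTensor_comp_apply (finRotate (n + 1))
    (fun m => M (f ((finRotate (n + 1)).symm m))) α β
  simp only [Function.comp_def, Equiv.symm_apply_apply] at htensor
  simp only [hcond]
  split_ifs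
  · exact htensor
  · rfl

theorem sum_siteTensor_update_mul_chainAction [Fintype V] [DecidableEq V]
    {M P : G → Matrix V V R} (hP : ∀ k u, P k * M u = if u = k then M u else 0)
    (h : G) (r : Fin L) :
    ∑ k, siteTensor (Function.update 1 r (P k)) * chainAction L M (k * h * k⁻¹) =
      twistedChainAction M h r := by
  simp only [chainAction, twistedChainAction, Finset.mul_sum, mul_ite, mul_zero,
    siteTensor_update_mul_of_orthogonal hP]
  rw [Finset.sum_comm]
  refine Finset.sum_congr rfl fun f _ => ?_
  rw [Finset.sum_eq_single (f r) (fun k _ hk => by simp [Ne.symm hk]) (by simp)]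
  simp only [if_true]

def IsChainInvariant [Fintype V] (M : G → Matrix V V R) (w : (Fin L → V) → R) : Prop :=
  ∀ h, chainAction L M h *ᵥ w = (if h = 1 then (1 : R) else 0) • w

theorem chainAction_mulVec_comp_finRotate [Fintype V] (n : ℕ) (M : G → Matrix V V R) (h : G)
    (w : (Fin (n + 1) → V) → R) :
    chainAction (n + 1) M h *ᵥ (fun α => w (α ∘ finRotate (n + 1))) =
      fun α => (twistedChainAction M h (Fin.last n) *ᵥ w) (α ∘ finRotate (n + 1)) := by
  have hw : (fun α => w (α ∘ finRotate (n + 1))) ∘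
      ((finRotate (n + 1)).symm.arrowCongr (Equiv.refl V)).symm = w :=
    funext fun β => congrArg w (funext fun m => congrArg β ((finRotate (n + 1)).symm_apply_apply m))
  rw [chainAction_eq_submatrix_twistedChainAction, submatrix_mulVec_equiv, hw]
  rfl

theorem IsChainInvariant.comp_finRotate [Fintype V] [DecidableEq V] {M P : G → Matrix V V R}
    (hP : ∀ k u, P k * M u = if u = k then M u else 0) {n : ℕ} {w : (Fin (n + 1) → V) → R}
    (hw : IsChainInvariant M w) : IsChainInvariant M fun α => w (α ∘ finRotate (n + 1)) := by
  intro h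
  rw [chainAction_mulVec_comp_finRotate]
  by_cases h1 : h = 1
  · subst h1
    simp only [twistedChainAction_one, hw 1]
    rfl
  · have hvanish : ∀ k, chainAction (n + 1) M (k * h * k⁻¹) *ᵥ w = 0 := fun k => by
      rw [hw, if_neg (conj_eq_one_iff.not.mpr h1), zero_smul]
    rw [← sum_siteTensor_update_mul_chainAction hP]
    funext α
    simp [Matrix.sum_mulVec, ← mulVec_mulVec, hvanish, h1]

end Chain

theorem Smat_pow_three : Smat ^ 3 = 1 := by
  simp [Smat, pow_succ, Matrix.one_fin_three]

theorem pig_inv_mul_pig (g : DihedralGroup 3) : pig g⁻¹ * pig g = 1 := by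
  rcases g with i | i
  · change Smat ^ (-i).val * Smat ^ i.val = 1
    rw [← pow_add, pow_eq_pow_mod _ Smat_pow_three, ← ZMod.val_add, neg_add_cancel,
      ZMod.val_zero, pow_zero]
  · change Tmat * Smat ^ i.val * (Tmat * Smat ^ i.val) = 1
    have hi := ZMod.val_lt i
    interval_cases i.val <;> simp [Smat, Tmat, pow_succ, Matrix.one_fin_three]

theorem pidual_mul_pidual (k u : DihedralGroup 3) :
    pidual k * pidual u = if u = k then pidual u else 0 := by
  rcases k with i | i <;> rcases u with j | j
  · simp [pidual]
  · simp [pidual]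
  · simp [pidual]
  · by_cases hji : j = i
    · subst hji
      simp [pidual]
    · have hne : (⟨(-i).val, ZMod.val_lt _⟩ : Fin 3) ≠ ⟨(-j).val, ZMod.val_lt _⟩ :=
        fun h => hji (neg_injective (ZMod.val_injective 3 (Fin.mk.inj h))).symm
      simp only [pidual, DihedralGroup.sr.injEq, hji, if_false]
      exact Matrix.single_mul_single_of_ne _ _ _ _ hne _

theorem pig_mul_pidual_mul_pig_inv_mul (g k u : DihedralGroup 3) :
    pig g * pidual k * pig g⁻¹ * (pig g * pidual u) = if u = k then pig g * pidual u else 0 := by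
  rw [mul_assoc (pig g * pidual k), ← mul_assoc (pig g⁻¹), pig_inv_mul_pig, one_mul, mul_assoc,
    pidual_mul_pidual, mul_ite, mul_zero]

theorem cyc_eq_finRotate {L : ℕ} (m : Fin L) : cyc m = finRotate L m := by
  have := m.neZero
  ext
  simp [cyc, Fin.val_add]

theorem transOp_eq_comp_finRotate (L : ℕ) (w : (Fin L → Fin 3) → ℂ) :
    transOp L w = fun α => w (α ∘ finRotate L) := by
  funext α
  simp only [transOp, cyc_eq_finRotate]
  rfl

theorem translation_preserves_physical_general (L : ℕ)
    (w : (Fin L → Fin 3) → ℂ) (hw : w ∈ physSpace L) :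
    transOp L w ∈ physSpace L := by
  rw [transOp_eq_comp_finRotate]
  obtain _ | n := L
  · simpa using hw
  exact fun g => IsChainInvariant.comp_finRotate (pig_mul_pidual_mul_pig_inv_mul g) (hw g)

/-- for L ≥ 2 the translation operator maps 𝒲 into itself. -/
theorem translation_preserves_physical (L : ℕ) (hL : 2 ≤ L)
    (w : (Fin L → Fin 3) → ℂ) (hw : w ∈ physSpace L) :
    transOp L w ∈ physSpace L :=
  translation_preserves_physical_general L w hw

end
end

section
/- For every integer L ≥ 2, the periodic Hamiltonian H maps the physical subspace 𝒲 into itself: if w ∈ 𝒲 then Hw ∈ 𝒲. -/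
open Matrix
open scoped Kronecker

noncomputable section

/-- The two-site Hamiltonian 𝔥_{k,l}, acting as 𝔥 on the (ordered) pair of
tensor factors (k,l) and as the identity elsewhere. -/
def hTwo (L : ℕ) (k l : Fin L) : Matrix (Fin L → Fin 3) (Fin L → Fin 3) ℂ :=
  Matrix.of fun α β =>
    hloc (α k, α l) (β k, β l) *
      ∏ m ∈ Finset.univ \ {k, l}, (if α m = β m then (1 : ℂ) else 0)

/-- The periodic Hamiltonian H = Σ_{k=1}^{L−1} 𝔥_{k,k+1} + 𝔥_{L,1}; written
cyclically as Σ_{k∈Fin L} 𝔥_{k,k+1 mod L}. -/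
def Ham (L : ℕ) : Matrix (Fin L → Fin 3) (Fin L → Fin 3) ℂ :=
  ∑ k : Fin L, hTwo L k (cyc k)

/-!
Basis states are configurations β : Fin L → Fin 3. Since π((σ^i τ)*) is the projection onto
the i-th basis vector, only the term h_m = σ^{β m} τ survives in A(g,h) on the state β, so A(g,h)
is nonzero there exactly when the ordered product `flux L β` of these reflections equals h, and
then it acts by the sitewise permutation underlying π(g). Hence 𝒲 consists of the vectors that
are supported on flux-trivial states and invariant under the sitewise permutations.

H commutes with the sitewise permutations because 𝔥 is invariant under any simultaneous
relabelling of the two sites. A nonzero matrix element of 𝔥_{k,k+1} changes only the sites k and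
k + 1, and it preserves the product σ^{α (k+1)} τ σ^{α k} τ = σ^{α (k+1) - α k}. Whether a cyclic
product is trivial does not change under rotation, so rotating that pair to the front shows that
H maps flux-trivial states to flux-trivial states. For this the two sites must be distinct, which
is where L ≥ 2 enters.
-/

def revProd {G : Type*} [Monoid G] {n : ℕ} (u : Fin n → G) : G := (List.ofFn u).reverse.prod

lemma prod_map_reverse_finRange {G : Type*} [Monoid G] {n : ℕ} (u : Fin n → G) :
    ((List.finRange n).reverse.map u).prod = revProd u := by
  rw [revProd, List.ofFn_eq_map, List.map_reverse]

section Group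

variable {G : Type*} [Group G]

lemma revProd_succ {n : ℕ} (u : Fin (n + 1) → G) :
    revProd u = revProd (fun i => u i.succ) * u 0 := by
  simp [revProd, List.ofFn_succ]

lemma revProd_comp_add_one_eq_one_iff {n : ℕ} (u : Fin (n + 1) → G) :
    revProd (fun i => u (i + 1)) = 1 ↔ revProd u = 1 := by
  have hshift : revProd (fun i => u (i + 1)) = u 0 * revProd (fun i => u i.succ) := by
    rw [revProd, List.ofFn_succ']
    simp [revProd, Fin.coeSucc_eq_succ, Fin.last_add_one]
  rw [hshift, revProd_succ, mul_eq_one_comm]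

lemma revProd_comp_add_eq_one_iff {n : ℕ} (u : Fin (n + 1) → G) (c : Fin (n + 1)) :
    revProd (fun i => u (i + c)) = 1 ↔ revProd u = 1 := by
  induction c using Fin.induction with
  | zero => simp
  | succ c ih =>
    have hstep : (fun i => u (i + c.succ)) = fun i => u (i + 1 + c.castSucc) := by
      funext i
      rw [← Fin.coeSucc_eq_succ, add_right_comm, add_assoc]
    rw [hstep, revProd_comp_add_one_eq_one_iff (fun i => u (i + c.castSucc)), ih]

lemma revProd_eq_of_mul_eq {n : ℕ} {u v : Fin (n + 2) → G}
    (hpair : u 1 * u 0 = v 1 * v 0) (hrest : ∀ i : Fin n, u i.succ.succ = v i.succ.succ) :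
    revProd u = revProd v := by
  rw [revProd_succ u, revProd_succ (fun i => u i.succ), revProd_succ v,
    revProd_succ (fun i => v i.succ), mul_assoc, mul_assoc]
  simp only [Fin.succ_zero_eq_one, hpair, hrest]

lemma revProd_eq_one_of_mul_eq {n : ℕ} {u v : Fin (n + 2) → G} (k : Fin (n + 2))
    (hpair : u (k + 1) * u k = v (k + 1) * v k)
    (hrest : ∀ m, m ≠ k → m ≠ k + 1 → u m = v m) (hu : revProd u = 1) :
    revProd v = 1 := by
  rw [← revProd_comp_add_eq_one_iff _ k] at hu ⊢
  rwa [← revProd_eq_of_mul_eq (u := fun i => u (i + k))]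
  · simpa [add_comm] using hpair
  · intro i
    apply hrest
    · simp
    · rw [add_comm k 1, Ne, add_left_inj, ← Fin.succ_zero_eq_one, Fin.succ_inj]
      exact Fin.succ_ne_zero i

end Group

/-- The only h for which π(h*) does not annihilate the basis vector a. -/
def sigmaPowTau (a : Fin 3) : DihedralGroup 3 := DihedralGroup.sr (-(a.val : ZMod 3))

lemma pidual_apply (x : DihedralGroup 3) (i j : Fin 3) :
    pidual x i j = if x = sigmaPowTau j ∧ i = j then 1 else 0 := by
  cases x with
  | r t => simp [pidual, sigmaPowTau]
  | sr t =>
    have key : ∀ t : ZMod 3, ∀ i j : Fin 3,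
        ((⟨(-t).val, ZMod.val_lt _⟩ : Fin 3) = i ∧ (⟨(-t).val, ZMod.val_lt _⟩ : Fin 3) = j) ↔
          (DihedralGroup.sr t = sigmaPowTau j ∧ i = j) := by
      decide
    simp only [pidual, Matrix.single, Matrix.of_apply, key]

lemma mul_pidual_apply (M : Matrix (Fin 3) (Fin 3) ℂ) (x : DihedralGroup 3) (i j : Fin 3) :
    (M * pidual x) i j = if x = sigmaPowTau j then M i j else 0 := by
  simp [Matrix.mul_apply, pidual_apply, ite_and]

lemma permMatrix_pow {n R : Type*} [DecidableEq n] [Fintype n] [Semiring R]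
    (σ : Equiv.Perm n) (k : ℕ) : (σ ^ k).permMatrix R = σ.permMatrix R ^ k := by
  induction k with
  | zero => simp
  | succ k ih => rw [pow_succ, Matrix.permMatrix_mul, ih, pow_succ']

def pigPerm : DihedralGroup 3 → Equiv.Perm (Fin 3)
  | DihedralGroup.r i => finRotate 3 ^ i.val
  | DihedralGroup.sr i => finRotate 3 ^ i.val * Equiv.swap 1 2

lemma pigPerm_one : pigPerm 1 = 1 := rfl

lemma pig_eq_permMatrix (g : DihedralGroup 3) : pig g = (pigPerm g).permMatrix ℂ := by
  have hS : Smat = (finRotate 3).permMatrix ℂ := by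
    ext i j; fin_cases i <;> fin_cases j <;> simp [Smat, PEquiv.toMatrix_apply]
  have hT : Tmat = (Equiv.swap 1 2 : Equiv.Perm (Fin 3)).permMatrix ℂ := by
    ext i j; fin_cases i <;> fin_cases j <;> simp [Tmat, PEquiv.toMatrix_apply] <;> decide
  cases g with
  | r i => rw [pig, pigPerm, hS, permMatrix_pow]
  | sr i => rw [pig, pigPerm, hS, hT, Matrix.permMatrix_mul, permMatrix_pow]

def sitePerm (L : ℕ) (p : Equiv.Perm (Fin 3)) : Equiv.Perm (Fin L → Fin 3) :=
  Equiv.piCongrRight fun _ => p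

lemma sitePerm_one (L : ℕ) : sitePerm L 1 = 1 := rfl

lemma prod_permMatrix_apply {L : ℕ} (p : Equiv.Perm (Fin 3)) (α β : Fin L → Fin 3) :
    ∏ m, p.permMatrix ℂ (α m) (β m) = (sitePerm L p).permMatrix ℂ α β := by
  simp [PEquiv.toMatrix_apply, sitePerm, Fintype.prod_boole, funext_iff]

def flux (L : ℕ) (α : Fin L → Fin 3) : DihedralGroup 3 := revProd fun m => sigmaPowTau (α m)

lemma Afold_eq (L : ℕ) (g h : DihedralGroup 3) :
    Afold L g h = (sitePerm L (pigPerm g)).permMatrix ℂ *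
      Matrix.diagonal fun β => if flux L β = h then 1 else 0 := by
  ext α β
  have hterm : ∀ f : Fin L → DihedralGroup 3,
      (if ((List.finRange L).reverse.map f).prod = h then
          ∏ m, (pig g * pidual (f m)) (α m) (β m) else 0) =
        if f = fun m => sigmaPowTau (β m) then
          (if flux L β = h then ∏ m, pig g (α m) (β m) else 0) else 0 := by
    intro f
    by_cases hf : f = fun m => sigmaPowTau (β m)
    · subst hf
      simp only [prod_map_reverse_finRange, mul_pidual_apply, if_true, flux]
      congr
    · obtain ⟨m, hm⟩ : ∃ m, f m ≠ sigmaPowTau (β m) := by simpa [funext_iff] using hf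
      rw [Finset.prod_eq_zero (Finset.mem_univ m) (by rw [mul_pidual_apply, if_neg hm])]
      simp [hf]
  rw [Afold, Matrix.sum_apply]
  simp only [apply_ite (fun M : Matrix _ _ ℂ => M α β), Matrix.of_apply, Matrix.zero_apply]
  rw [Finset.sum_congr rfl fun f _ => hterm f, Finset.sum_ite_eq' Finset.univ,
    if_pos (Finset.mem_univ _), pig_eq_permMatrix, prod_permMatrix_apply, Matrix.mul_diagonal,
    mul_ite, mul_one, mul_zero]

lemma Afold_mulVec (L : ℕ) (g h : DihedralGroup 3) (w : (Fin L → Fin 3) → ℂ)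
    (α : Fin L → Fin 3) :
    (Afold L g h *ᵥ w) α =
      if flux L (sitePerm L (pigPerm g) α) = h then w (sitePerm L (pigPerm g) α) else 0 := by
  rw [Afold_eq, ← Matrix.mulVec_mulVec, Matrix.permMatrix_mulVec, Function.comp_apply,
    Matrix.mulVec_diagonal, ite_mul, one_mul, zero_mul]

lemma mem_physSpace_iff (L : ℕ) (w : (Fin L → Fin 3) → ℂ) :
    w ∈ physSpace L ↔
      (∀ α, flux L α ≠ 1 → w α = 0) ∧ ∀ g α, w (sitePerm L (pigPerm g) α) = w α := by
  constructor
  · intro hw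
    have hsupp : ∀ α, flux L α ≠ 1 → w α = 0 := by
      intro α hα
      simpa [Afold_mulVec, pigPerm_one, sitePerm_one, hα] using congrFun (hw 1 (flux L α)) α
    refine ⟨hsupp, fun g α => ?_⟩
    have hg := congrFun (hw g 1) α
    rw [Afold_mulVec] at hg
    by_cases hflux : flux L (sitePerm L (pigPerm g) α) = 1
    · simpa [hflux] using hg
    · simpa [hflux, hsupp _ hflux] using hg
  · rintro ⟨hsupp, hinv⟩ g h
    funext α
    rw [Afold_mulVec, hinv, Pi.smul_apply]
    by_cases hw0 : w α = 0
    · simp [hw0]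
    have hgα : flux L (sitePerm L (pigPerm g) α) = 1 :=
      by_contra fun hgα => hw0 (hinv g α ▸ hsupp _ hgα)
    rw [hgα]
    by_cases h1 : h = 1
    · simp [h1]
    · simp [h1, Ne.symm h1]

lemma hloc_perm_apply (p : Equiv.Perm (Fin 3)) (a b c d : Fin 3) :
    hloc (p a, p b) (p c, p d) = hloc (a, b) (c, d) := by
  simp only [hloc, Matrix.sum_apply]
  refine Fintype.sum_equiv (Equiv.mulLeft p⁻¹) _ _ fun γ => ?_
  simp only [Equiv.coe_mulLeft, Equiv.Perm.mul_apply, Matrix.smul_apply, Matrix.sub_apply,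
    Matrix.kroneckerMap_apply, Matrix.single, Matrix.of_apply, Equiv.Perm.inv_eq_iff_eq]

-- γ 0, γ 1, γ 2 is an arithmetic progression mod 3, and σ^b τ σ^a τ = σ^(b - a).
lemma sigmaPowTau_mul_comp_perm (γ : Equiv.Perm (Fin 3)) :
    sigmaPowTau (γ 1) * sigmaPowTau (γ 0) = sigmaPowTau (γ 2) * sigmaPowTau (γ 1) := by
  revert γ
  decide

lemma sigmaPowTau_mul_eq_of_hloc_ne_zero {a b c d : Fin 3} (h : hloc (a, b) (c, d) ≠ 0) :
    sigmaPowTau b * sigmaPowTau a = sigmaPowTau d * sigmaPowTau c := by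
  rw [hloc, Matrix.sum_apply] at h
  obtain ⟨γ, -, hγ⟩ := Finset.exists_ne_zero_of_sum_ne_zero h
  simp only [Matrix.single_kronecker_single, Matrix.smul_apply, Matrix.sub_apply,
    Matrix.single_apply, Prod.mk.injEq] at hγ
  by_cases h₁ : (γ 0 = a ∧ γ 1 = b) ∧ γ 1 = c ∧ γ 2 = d
  · obtain ⟨⟨rfl, rfl⟩, rfl, rfl⟩ := h₁
    exact sigmaPowTau_mul_comp_perm γ
  by_cases h₂ : (γ 1 = a ∧ γ 0 = b) ∧ γ 2 = c ∧ γ 1 = d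
  · obtain ⟨⟨rfl, rfl⟩, rfl, rfl⟩ := h₂
    have h₀₂ := sigmaPowTau_mul_comp_perm (γ * Equiv.swap 0 2)
    rw [Equiv.Perm.mul_apply, Equiv.Perm.mul_apply, Equiv.Perm.mul_apply, Equiv.swap_apply_left,
      Equiv.swap_apply_right, Equiv.swap_apply_of_ne_of_ne (by decide) (by decide)] at h₀₂
    exact h₀₂.symm
  simp [h₁, h₂] at hγ

lemma hTwo_sitePerm_apply (L : ℕ) (k l : Fin L) (p : Equiv.Perm (Fin 3))
    (α β : Fin L → Fin 3) :
    hTwo L k l (sitePerm L p α) (sitePerm L p β) = hTwo L k l α β := by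
  simp only [hTwo, Matrix.of_apply, sitePerm, Equiv.piCongrRight_apply, Pi.map_apply,
    hloc_perm_apply, EmbeddingLike.apply_eq_iff_eq]

lemma Ham_sitePerm_apply (L : ℕ) (p : Equiv.Perm (Fin 3)) (α β : Fin L → Fin 3) :
    Ham L (sitePerm L p α) (sitePerm L p β) = Ham L α β := by
  simp only [Ham, Matrix.sum_apply, hTwo_sitePerm_apply]

lemma Matrix.mulVec_comp_equiv {ι R : Type*} [Fintype ι] [NonUnitalNonAssocSemiring R]
    (M : Matrix ι ι R) (e : ι ≃ ι) (hM : ∀ i j, M (e i) (e j) = M i j) (v : ι → R) :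
    M *ᵥ (v ∘ e) = (M *ᵥ v) ∘ e := by
  funext i
  exact Fintype.sum_equiv e _ _ fun j => by simp only [Function.comp_apply, hM]

lemma hTwo_apply_ne_zero {L : ℕ} {k l : Fin L} {α β : Fin L → Fin 3}
    (h : hTwo L k l α β ≠ 0) :
    hloc (α k, α l) (β k, β l) ≠ 0 ∧ ∀ m, m ≠ k → m ≠ l → α m = β m := by
  obtain ⟨hloc_ne, hid_ne⟩ := mul_ne_zero_iff.mp h
  refine ⟨hloc_ne, fun m hk hl => by_contra fun hne => hid_ne ?_⟩
  exact Finset.prod_eq_zero (i := m) (by simp [hk, hl]) (if_neg hne)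

lemma cyc_eq_add_one {n : ℕ} (k : Fin (n + 2)) : cyc k = k + 1 := by
  ext
  simp [cyc, Fin.val_add]

lemma flux_eq_one_of_Ham_apply_ne_zero {L : ℕ} (hL : 2 ≤ L) {α β : Fin L → Fin 3}
    (hH : Ham L α β ≠ 0) (hβ : flux L β = 1) : flux L α = 1 := by
  obtain ⟨n, rfl⟩ : ∃ n, L = n + 2 := ⟨L - 2, by omega⟩
  rw [Ham, Matrix.sum_apply] at hH
  obtain ⟨k, -, hk⟩ := Finset.exists_ne_zero_of_sum_ne_zero hH
  obtain ⟨hloc_ne, hoff⟩ := hTwo_apply_ne_zero hk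
  rw [cyc_eq_add_one] at hloc_ne hoff
  exact revProd_eq_one_of_mul_eq k (sigmaPowTau_mul_eq_of_hloc_ne_zero hloc_ne).symm
    (fun m hmk hmk' => congrArg sigmaPowTau (hoff m hmk hmk').symm) hβ

/-- for L ≥ 2 the periodic Hamiltonian maps 𝒲 into itself. -/
theorem hamiltonian_preserves_physical (L : ℕ) (hL : 2 ≤ L)
    (w : (Fin L → Fin 3) → ℂ) (hw : w ∈ physSpace L) :
    (Ham L).mulVec w ∈ physSpace L := by
  rw [mem_physSpace_iff] at hw ⊢
  obtain ⟨hsupp, hinv⟩ := hw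
  refine ⟨fun α hα => ?_, fun g α => ?_⟩
  · refine Finset.sum_eq_zero fun β _ => ?_
    by_cases hβ : flux L β = 1
    · have hH : Ham L α β = 0 :=
        by_contra fun hH => hα (flux_eq_one_of_Ham_apply_ne_zero hL hH hβ)
      exact mul_eq_zero_of_left hH _
    · exact mul_eq_zero_of_right _ (hsupp β hβ)
  · have hcomm := (Ham L).mulVec_comp_equiv _ (Ham_sitePerm_apply L (pigPerm g)) w
    rw [show w ∘ sitePerm L (pigPerm g) = w from funext (hinv g)] at hcomm
    exact (congrFun hcomm α).symm

end
end
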